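/- Let (K_n) be a sequence of polygon caps (each with rotation angle π/2 and some finite angle set) converging in Hausdorff distance to a cap K with rotation angle π/2. Then ∫_0^{π/2} |g_{K_n}^+(t) − g_K^+(t)| dt → 0 as n → ∞. -/

import Mathlib

noncomputable section

open Real MeasureTheory Set Filter Topology

abbrev Pt := EuclideanSpace ℝ (Fin 2)

def mk2 (x y : ℝ) : Pt := (WithLp.equiv 2 (Fin 2 → ℝ)).symm ![x, y]

def dotp (p q : Pt) : ℝ := p 0 * q 0 + p 1 * q 1

def uvec (t : ℝ) : Pt := mk2 (Real.cos t) (Real.sin t)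

def vvec (t : ℝ) : Pt := mk2 (-Real.sin t) (Real.cos t)

def suppFn (K : Set Pt) (t : ℝ) : ℝ := sSup ((fun p => dotp p (uvec t)) '' K)

def suppLine (K : Set Pt) (t : ℝ) : Set Pt := {p | dotp p (uvec t) = suppFn K t}

def edge (K : Set Pt) (t : ℝ) : Set Pt := K ∩ suppLine K t

def vplus (K : Set Pt) (t : ℝ) : Pt :=
  suppFn K t • uvec t + sSup ((fun p => dotp p (vvec t)) '' edge K t) • vvec t

def vminus (K : Set Pt) (t : ℝ) : Pt :=
  suppFn K t • uvec t + sInf ((fun p => dotp p (vvec t)) '' edge K t) • vvec t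

def vinter (K : Set Pt) (a b : ℝ) : Pt :=
  mk2 ((suppFn K a * Real.sin b - suppFn K b * Real.sin a) / Real.sin (b - a))
      ((suppFn K b * Real.cos a - suppFn K a * Real.cos b) / Real.sin (b - a))

def IsConvexBody (K : Set Pt) : Prop := K.Nonempty ∧ IsCompact K ∧ Convex ℝ K

def Jset (ω : ℝ) : Set ℝ := Icc 0 ω ∪ Icc (π/2) (ω + π/2)

def IsCap (ω : ℝ) (K : Set Pt) : Prop :=
  IsConvexBody K ∧
  suppFn K ω = 1 ∧ suppFn K (π/2) = 1 ∧
  suppFn K (ω + π) = 0 ∧ suppFn K (3*π/2) = 0 ∧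
  K = ⋂ t ∈ Jset ω ∪ {ω + π, 3*π/2}, {p : Pt | dotp p (uvec t) ≤ suppFn K t}

def polyAngles (ω : ℝ) (Θ : Finset ℝ) : Set ℝ :=
  ↑Θ ∪ (fun s => s + π/2) '' ↑Θ ∪ {ω, π/2, ω + π, 3*π/2}

def IsPolyCap (ω : ℝ) (Θ : Finset ℝ) (K : Set Pt) : Prop :=
  IsCap ω K ∧ K = ⋂ t ∈ polyAngles ω Θ, {p : Pt | dotp p (uvec t) ≤ suppFn K t}

def Qminus (K : Set Pt) (t : ℝ) : Set Pt :=
  {p | dotp p (uvec t) < suppFn K t - 1 ∧ dotp p (uvec (t + π/2)) < suppFn K (t + π/2) - 1}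

def Qplus (K : Set Pt) (t : ℝ) : Set Pt :=
  {p | dotp p (uvec t) ≤ suppFn K t ∧ dotp p (uvec (t + π/2)) ≤ suppFn K (t + π/2)}

def hallway (S : Set Pt) (t : ℝ) : Set Pt := Qplus S t \ Qminus S t

def fan (ω : ℝ) : Set Pt := {p | 0 ≤ dotp p (uvec ω) ∧ 0 ≤ dotp p (uvec (π/2))}

def parall (ω : ℝ) : Set Pt :=
  {p | dotp p (uvec (π/2)) ∈ Icc (0:ℝ) 1 ∧ dotp p (uvec ω) ∈ Icc (0:ℝ) 1}

def innerCorner (K : Set Pt) (t : ℝ) : Pt :=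
  (suppFn K t - 1) • uvec t + (suppFn K (t + π/2) - 1) • vvec t

def outerCorner (K : Set Pt) (t : ℝ) : Pt :=
  suppFn K t • uvec t + suppFn K (t + π/2) • vvec t

def wedge (ω : ℝ) (K : Set Pt) (t : ℝ) : Set Pt := fan ω ∩ Qminus K t

def niche (ω : ℝ) (K : Set Pt) : Set Pt := fan ω ∩ ⋃ t ∈ Ioo 0 ω, Qminus K t

def polyNiche (ω : ℝ) (Θ : Finset ℝ) (K : Set Pt) : Set Pt :=
  parall ω ∩ ⋃ t ∈ Θ, Qminus K t

def upperBoundary (ω : ℝ) (K : Set Pt) : Set Pt := ⋃ t ∈ Icc 0 (ω + π/2), edge K t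

def area (X : Set Pt) : ℝ := (volume X).toReal

def Wpt (K : Set Pt) (t : ℝ) : Pt := mk2 ((suppFn K t - 1) / Real.cos t) 0

def Zpt (ω : ℝ) (K : Set Pt) (t : ℝ) : Pt :=
  ((suppFn K (t + π/2) - 1) / Real.sin (t + π/2 - ω)) • vvec ω

def wgap (K : Set Pt) (t : ℝ) : ℝ := dotp (vminus K 0 - Wpt K t) (uvec 0)

def zgap (ω : ℝ) (K : Set Pt) (t : ℝ) : ℝ := dotp (vplus K (ω + π/2) - Zpt ω K t) (vvec ω)

def wgapInf (ω : ℝ) (K : Set Pt) : ℝ := sInf (wgap K '' Ioo 0 ω)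

def zgapInf (ω : ℝ) (K : Set Pt) : ℝ := sInf (zgap ω K '' Ioo 0 ω)

def fplus (K : Set Pt) (t : ℝ) : ℝ := dotp (outerCorner K t - vplus K t) (vvec t)
def fminus (K : Set Pt) (t : ℝ) : ℝ := dotp (outerCorner K t - vminus K t) (vvec t)
def gplus (K : Set Pt) (t : ℝ) : ℝ := dotp (outerCorner K t - vplus K (t + π/2)) (uvec t)
def gminus (K : Set Pt) (t : ℝ) : ℝ := dotp (outerCorner K t - vminus K (t + π/2)) (uvec t)

def oPt (ω : ℝ) : Pt := mk2 (Real.tan (π/4 - ω/2)) 1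

def hplane (c : Bool) (t h : ℝ) : Set Pt :=
  if c then {p | dotp p (uvec t) ≤ h} else {p | dotp p (uvec t) < h}

@[simp] lemma mk2_zero (x y : ℝ) : mk2 x y 0 = x := rfl
@[simp] lemma mk2_one (x y : ℝ) : mk2 x y 1 = y := rfl

lemma dotp_eq_inner (p q : Pt) : dotp p q = inner ℝ p q := by
  rw [PiLp.inner_apply, Fin.sum_univ_two]
  simp [dotp, mul_comm]

lemma abs_dotp_le (p q : Pt) : |dotp p q| ≤ ‖p‖ * ‖q‖ := by
  rw [dotp_eq_inner]; exact abs_real_inner_le_norm p q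

@[simp] lemma norm_uvec (t : ℝ) : ‖uvec t‖ = 1 := by
  have : ‖uvec t‖ ^ 2 = 1 := by
    rw [← real_inner_self_eq_norm_sq, ← dotp_eq_inner]
    simp [dotp, uvec]
    nlinarith [sin_sq_add_cos_sq t]
  nlinarith [norm_nonneg (uvec t)]

lemma vvec_eq_uvec (t : ℝ) : vvec t = uvec (t + π/2) := by
  have h1 : Real.cos (t + π/2) = -Real.sin t := by
    rw [Real.cos_add_pi_div_two]
  have h2 : Real.sin (t + π/2) = Real.cos t := by
    rw [Real.sin_add_pi_div_two]
  ext i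
  fin_cases i <;> simp [vvec, uvec, h1, h2]

lemma dotp_sub_left (p q r : Pt) : dotp (p - q) r = dotp p r - dotp q r := by
  simp [dotp]; ring

lemma dotp_sub_le (p q r : Pt) : |dotp p r - dotp q r| ≤ dist p q * ‖r‖ := by
  rw [← dotp_sub_left]
  calc |dotp (p - q) r| ≤ ‖p - q‖ * ‖r‖ := abs_dotp_le _ _
  _ = dist p q * ‖r‖ := by rw [dist_eq_norm]

lemma continuous_dotp (q : Pt) : Continuous (fun p : Pt => dotp p q) := by
  simp only [dotp_eq_inner]
  exact continuous_id.inner continuous_const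

variable {K L : Set Pt}

lemma suppFn_isGreatest (hc : IsCompact K) (hne : K.Nonempty) (t : ℝ) :
    IsGreatest ((fun p => dotp p (uvec t)) '' K) (suppFn K t) := by
  obtain ⟨p, hp, hmax⟩ := hc.exists_isMaxOn hne ((continuous_dotp (uvec t)).continuousOn)
  have hg : IsGreatest ((fun p => dotp p (uvec t)) '' K) (dotp p (uvec t)) := by
    constructor
    · exact ⟨p, hp, rfl⟩
    · rintro x ⟨q, hq, rfl⟩; exact hmax hq
  rwa [show suppFn K t = dotp p (uvec t) from hg.csSup_eq]

lemma exists_suppFn_eq (hc : IsCompact K) (hne : K.Nonempty) (t : ℝ) :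
    ∃ p ∈ K, dotp p (uvec t) = suppFn K t := by
  exact (suppFn_isGreatest hc hne t).1

lemma le_suppFn (hc : IsCompact K) (hne : K.Nonempty) {t : ℝ} {p : Pt} (hp : p ∈ K) :
    dotp p (uvec t) ≤ suppFn K t :=
  (suppFn_isGreatest hc hne t).2 ⟨p, hp, rfl⟩

lemma edge_nonempty (hc : IsCompact K) (hne : K.Nonempty) (t : ℝ) : (edge K t).Nonempty := by
  exact (suppFn_isGreatest hc hne t).1

lemma edge_subset (t : ℝ) : edge K t ⊆ K := inter_subset_left

lemma abs_suppFn_le (hc : IsCompact K) (hne : K.Nonempty) {R : ℝ} (hR : ∀ p ∈ K, ‖p‖ ≤ R)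
    (t : ℝ) : |suppFn K t| ≤ R := by
  obtain ⟨p, hp, hpe⟩ := exists_suppFn_eq hc hne t
  rw [← hpe]
  calc |dotp p (uvec t)| ≤ ‖p‖ * ‖uvec t‖ := abs_dotp_le _ _
  _ ≤ R := by rw [norm_uvec, mul_one]; exact hR p hp

lemma suppFn_sub_le (hcK : IsCompact K) (hneK : K.Nonempty) (hcL : IsCompact L)
    (hneL : L.Nonempty) (t : ℝ) :
    suppFn K t - suppFn L t ≤ Metric.hausdorffDist K L := by
  obtain ⟨p, hp, hpe⟩ := exists_suppFn_eq hcK hneK t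
  rw [← hpe]
  obtain ⟨q, hq, hdq⟩ := hcL.exists_infDist_eq_dist hneL p
  have h1 : Metric.infDist p L ≤ Metric.hausdorffDist K L :=
    Metric.infDist_le_hausdorffDist_of_mem hp
      (Metric.hausdorffEdist_ne_top_of_nonempty_of_bounded hneK hneL hcK.isBounded hcL.isBounded)
  have h2 : dotp p (uvec t) - dotp q (uvec t) ≤ dist p q := by
    have := dotp_sub_le p q (uvec t)
    rw [norm_uvec, mul_one] at this
    exact (le_abs_self _).trans this
  have h3 := le_suppFn hcL hneL hq (t := t)
  linarith [hdq ▸ h1]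

lemma abs_suppFn_sub_le (hcK : IsCompact K) (hneK : K.Nonempty) (hcL : IsCompact L)
    (hneL : L.Nonempty) (t : ℝ) :
    |suppFn K t - suppFn L t| ≤ Metric.hausdorffDist K L := by
  rw [abs_le]
  constructor
  · have := suppFn_sub_le hcL hneL hcK hneK t
    rw [Metric.hausdorffDist_comm] at this
    linarith
  · exact suppFn_sub_le hcK hneK hcL hneL t

lemma coord_le_norm (p : Pt) (i : Fin 2) : |p i| ≤ ‖p‖ := by
  have h := abs_real_inner_le_norm (EuclideanSpace.single i (1:ℝ)) p
  rw [EuclideanSpace.inner_single_left, EuclideanSpace.norm_single] at h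
  simpa using h

lemma suppFn_lip (hc : IsCompact K) (hne : K.Nonempty) {R : ℝ} (hR : ∀ p ∈ K, ‖p‖ ≤ R)
    (x y : ℝ) : |suppFn K x - suppFn K y| ≤ 2 * R * |x - y| := by
  have key : ∀ x y : ℝ, suppFn K x - suppFn K y ≤ 2 * R * |x - y| := by
    intro x y
    obtain ⟨p, hp, hpe⟩ := exists_suppFn_eq hc hne x
    rw [← hpe]
    have h3 := le_suppFn hc hne hp (t := y)
    have hp0 : |p 0| ≤ R := (coord_le_norm p 0).trans (hR p hp)
    have hp1 : |p 1| ≤ R := (coord_le_norm p 1).trans (hR p hp)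
    have hcos : |Real.cos x - Real.cos y| ≤ |x - y| := by
      rw [Real.cos_sub_cos]
      have h1 : |Real.sin ((x+y)/2)| ≤ 1 := abs_sin_le_one _
      have h2 : |Real.sin ((x-y)/2)| ≤ |(x-y)/2| := Real.abs_sin_le_abs
      calc |-2 * Real.sin ((x+y)/2) * Real.sin ((x-y)/2)|
          = 2 * |Real.sin ((x+y)/2)| * |Real.sin ((x-y)/2)| := by
            rw [abs_mul, abs_mul]; norm_num
      _ ≤ 2 * 1 * |(x-y)/2| := by
            apply mul_le_mul _ h2 (abs_nonneg _) (by positivity)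
            apply mul_le_mul_of_nonneg_left h1 (by norm_num)
      _ = |x - y| := by rw [abs_div]; rw [abs_two]; ring
    have hsin : |Real.sin x - Real.sin y| ≤ |x - y| := by
      rw [Real.sin_sub_sin]
      have h1 : |Real.cos ((x+y)/2)| ≤ 1 := abs_cos_le_one _
      have h2 : |Real.sin ((x-y)/2)| ≤ |(x-y)/2| := Real.abs_sin_le_abs
      calc |2 * Real.sin ((x-y)/2) * Real.cos ((x+y)/2)|
          = 2 * |Real.sin ((x-y)/2)| * |Real.cos ((x+y)/2)| := by
            rw [abs_mul, abs_mul]; norm_num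
      _ ≤ 2 * |(x-y)/2| * 1 := by
            apply mul_le_mul _ h1 (abs_nonneg _) (by positivity)
            apply mul_le_mul_of_nonneg_left h2 (by norm_num)
      _ = |x - y| := by rw [abs_div]; rw [abs_two]; ring
    have hd : dotp p (uvec x) - dotp p (uvec y) = p 0 * (Real.cos x - Real.cos y)
        + p 1 * (Real.sin x - Real.sin y) := by simp [dotp, uvec]; ring
    have h5 : p 0 * (Real.cos x - Real.cos y) ≤ R * |x - y| := by
      calc p 0 * (Real.cos x - Real.cos y) ≤ |p 0 * (Real.cos x - Real.cos y)| := le_abs_self _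
      _ = |p 0| * |Real.cos x - Real.cos y| := abs_mul _ _
      _ ≤ R * |x - y| := by
          apply mul_le_mul hp0 hcos (abs_nonneg _) ((abs_nonneg _).trans hp0)
    have h6 : p 1 * (Real.sin x - Real.sin y) ≤ R * |x - y| := by
      calc p 1 * (Real.sin x - Real.sin y) ≤ |p 1 * (Real.sin x - Real.sin y)| := le_abs_self _
      _ = |p 1| * |Real.sin x - Real.sin y| := abs_mul _ _
      _ ≤ R * |x - y| := by
          apply mul_le_mul hp1 hsin (abs_nonneg _) ((abs_nonneg _).trans hp1)
    linarith
  rw [abs_sub_le_iff]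
  exact ⟨key x y, by rw [abs_sub_comm]; exact key y x⟩

lemma lipschitzWith_suppFn (hc : IsCompact K) (hne : K.Nonempty) {R : ℝ} (hR0 : 0 ≤ R)
    (hR : ∀ p ∈ K, ‖p‖ ≤ R) : LipschitzWith (2 * R.toNNReal) (suppFn K) := by
  rw [lipschitzWith_iff_dist_le_mul]
  intro a b
  rw [Real.dist_eq, Real.dist_eq]
  have := suppFn_lip hc hne hR a b
  calc |suppFn K a - suppFn K b| ≤ 2 * R * |a - b| := this
  _ = ↑(2 * R.toNNReal) * |a - b| := by
      rw [NNReal.coe_mul, Real.coe_toNNReal R hR0]; norm_num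

lemma continuous_suppFn (hc : IsCompact K) (hne : K.Nonempty) : Continuous (suppFn K) := by
  obtain ⟨R, hR⟩ := hc.isBounded.exists_norm_le
  have hR0 : 0 ≤ R := le_trans (norm_nonneg _) (hR hne.choose hne.choose_spec)
  exact (lipschitzWith_suppFn hc hne hR0 hR).continuous

lemma hasDerivAt_dotp_uvec (p : Pt) (s : ℝ) :
    HasDerivAt (fun r => dotp p (uvec r)) (dotp p (vvec s)) s := by
  have h : (fun r => dotp p (uvec r)) = fun r => p 0 * Real.cos r + p 1 * Real.sin r := by
    funext r; simp [dotp, uvec]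
  rw [h]
  have : dotp p (vvec s) = p 0 * (-Real.sin s) + p 1 * Real.cos s := by simp [dotp, vvec]
  rw [this]
  exact ((Real.hasDerivAt_cos s).const_mul (p 0)).add ((Real.hasDerivAt_sin s).const_mul (p 1))

lemma edge_dotp_vvec (hc : IsCompact K) (hne : K.Nonempty) {s : ℝ}
    (hs : DifferentiableAt ℝ (suppFn K) s) {p : Pt} (hp : p ∈ edge K s) :
    dotp p (vvec s) = deriv (suppFn K) s := by
  obtain ⟨hpK, hpl⟩ := hp
  have hpl' : dotp p (uvec s) = suppFn K s := hpl
  have hmin : IsLocalMin (fun r => suppFn K r - dotp p (uvec r)) s := by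
    apply Filter.Eventually.of_forall
    intro x
    have h1 := le_suppFn hc hne hpK (t := x)
    simp only [hpl']
    linarith
  have hder : deriv (fun r => suppFn K r - dotp p (uvec r)) s
      = deriv (suppFn K) s - dotp p (vvec s) := by
    rw [deriv_fun_sub hs (hasDerivAt_dotp_uvec p s).differentiableAt,
      (hasDerivAt_dotp_uvec p s).deriv]
  have := hmin.deriv_eq_zero
  rw [hder] at this
  linarith

@[simp] lemma norm_vvec (s : ℝ) : ‖vvec s‖ = 1 := by rw [vvec_eq_uvec]; exact norm_uvec _

def Msup (K : Set Pt) (s : ℝ) : ℝ := sSup ((fun p => dotp p (vvec s)) '' edge K s)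

lemma Msup_eq_deriv (hc : IsCompact K) (hne : K.Nonempty) {s : ℝ}
    (hs : DifferentiableAt ℝ (suppFn K) s) : Msup K s = deriv (suppFn K) s := by
  have himg : (fun p => dotp p (vvec s)) '' edge K s = {deriv (suppFn K) s} := by
    apply Subset.antisymm
    · rintro x ⟨p, hp, rfl⟩
      exact edge_dotp_vvec hc hne hs hp
    · rintro x (rfl : x = _)
      obtain ⟨p, hp⟩ := edge_nonempty hc hne s
      exact ⟨p, hp, edge_dotp_vvec hc hne hs hp⟩
  rw [Msup, himg, csSup_singleton]

lemma stab (hc : IsCompact K) (hne : K.Nonempty) (s c : ℝ)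
    (hconst : ∀ p ∈ edge K s, dotp p (vvec s) = c) {ε : ℝ} (hε : 0 < ε) :
    ∃ δ > 0, ∀ p : Pt, Metric.infDist p K ≤ δ → suppFn K s - δ ≤ dotp p (uvec s) →
      |dotp p (vvec s) - c| ≤ ε := by
  have claim : ∃ η > 0, ∀ q ∈ K, suppFn K s - η < dotp q (uvec s) →
      |dotp q (vvec s) - c| ≤ ε/2 := by
    set E := K ∩ {q : Pt | ε/2 ≤ |dotp q (vvec s) - c|} with hEdef
    have hEc : IsCompact E := hc.inter_right
      (isClosed_le continuous_const (((continuous_dotp (vvec s)).sub continuous_const).abs))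
    by_cases hE : E.Nonempty
    · obtain ⟨q0, hq0E, hq0max⟩ := hEc.exists_isMaxOn hE (continuous_dotp (uvec s)).continuousOn
      have hq0K : q0 ∈ K := hq0E.1
      have hlt : dotp q0 (uvec s) < suppFn K s := by
        rcases lt_or_eq_of_le (le_suppFn hc hne hq0K (t := s)) with h | h
        · exact h
        · exfalso
          have hedge : q0 ∈ edge K s := ⟨hq0K, h⟩
          have h2 := hconst q0 hedge
          have h3 : ε/2 ≤ |dotp q0 (vvec s) - c| := hq0E.2
          rw [h2] at h3
          simp at h3
          linarith
      refine ⟨suppFn K s - dotp q0 (uvec s), by linarith, fun q hqK hq => ?_⟩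
      by_contra hcon
      push_neg at hcon
      have hqE : q ∈ E := ⟨hqK, le_of_lt hcon⟩
      have h7 : dotp q (uvec s) ≤ dotp q0 (uvec s) := hq0max hqE
      linarith
    · refine ⟨1, one_pos, fun q hqK _ => ?_⟩
      by_contra hcon
      push_neg at hcon
      exact hE ⟨q, hqK, le_of_lt hcon⟩
  obtain ⟨η, hη, hclaim⟩ := claim
  refine ⟨min (ε/2) (η/4), by positivity, fun p hpd hpl => ?_⟩
  obtain ⟨q, hqK, hdq⟩ := hc.exists_infDist_eq_dist hne p
  have hdpq : dist p q ≤ min (ε/2) (η/4) := hdq ▸ hpd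
  have h1 : |dotp p (uvec s) - dotp q (uvec s)| ≤ dist p q := by
    have := dotp_sub_le p q (uvec s); rwa [norm_uvec, mul_one] at this
  have h2 : |dotp p (vvec s) - dotp q (vvec s)| ≤ dist p q := by
    have := dotp_sub_le p q (vvec s); rwa [norm_vvec, mul_one] at this
  have hmin1 : dist p q ≤ ε/2 := hdpq.trans (min_le_left _ _)
  have hmin2 : dist p q ≤ η/4 := hdpq.trans (min_le_right _ _)
  have h3 : suppFn K s - η < dotp q (uvec s) := by
    have := abs_le.1 h1
    have hδ : min (ε/2) (η/4) ≤ η/4 := min_le_right _ _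
    linarith
  have h4 := hclaim q hqK h3
  have h5 := abs_le.1 h2
  have h6 := abs_le.1 h4
  rw [abs_le]
  constructor <;> linarith

lemma gplus_eq (K : Set Pt) (t : ℝ) : gplus K t = suppFn K t + Msup K (t + π/2) := by
  have hv : vplus K (t + π/2)
      = suppFn K (t + π/2) • uvec (t + π/2) + Msup K (t + π/2) • vvec (t + π/2) := rfl
  rw [gplus, outerCorner, hv]
  set a := suppFn K t
  set b := suppFn K (t + π/2)
  set M := Msup K (t + π/2)
  have hc : Real.cos (t + π/2) = -Real.sin t := by rw [Real.cos_add_pi_div_two]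
  have hs : Real.sin (t + π/2) = Real.cos t := by rw [Real.sin_add_pi_div_two]
  simp only [dotp, uvec, vvec, PiLp.sub_apply, PiLp.add_apply,
    PiLp.smul_apply, mk2_zero, mk2_one, smul_eq_mul, hc, hs]
  linear_combination (a + M) * (Real.sin_sq_add_cos_sq t)

lemma abs_Msup_le (hc : IsCompact K) (hne : K.Nonempty) {R : ℝ} (hR : ∀ p ∈ K, ‖p‖ ≤ R)
    (s : ℝ) : |Msup K s| ≤ R := by
  obtain ⟨p0, hp0⟩ := edge_nonempty hc hne s
  have hbdd : ∀ x ∈ (fun p => dotp p (vvec s)) '' edge K s, x ∈ Icc (-R) R := by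
    rintro x ⟨p, hp, rfl⟩
    have h1 : |dotp p (vvec s)| ≤ R := by
      have := abs_dotp_le p (vvec s)
      rw [norm_vvec, mul_one] at this
      exact this.trans (hR p (edge_subset s hp))
    exact abs_le.1 h1
  have hne' : ((fun p => dotp p (vvec s)) '' edge K s).Nonempty := ⟨_, p0, hp0, rfl⟩
  have hub : Msup K s ≤ R := csSup_le hne' (fun x hx => (hbdd x hx).2)
  have hlb : -R ≤ Msup K s := by
    refine le_trans (hbdd _ ⟨p0, hp0, rfl⟩).1 (le_csSup ⟨R, fun x hx => (hbdd x hx).2⟩ ⟨p0, hp0, rfl⟩)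
  rw [abs_le]; exact ⟨hlb, hub⟩

lemma Msup_tendsto {Kseq : ℕ → Set Pt} (hcK : IsCompact K) (hneK : K.Nonempty)
    (hcn : ∀ n, IsCompact (Kseq n)) (hnen : ∀ n, (Kseq n).Nonempty)
    (hconv : Tendsto (fun n => Metric.hausdorffDist (Kseq n) K) atTop (𝓝 0))
    {s : ℝ} (hs : DifferentiableAt ℝ (suppFn K) s) :
    Tendsto (fun n => Msup (Kseq n) s) atTop (𝓝 (deriv (suppFn K) s)) := by
  set c := deriv (suppFn K) s
  rw [Metric.tendsto_atTop]
  intro ε hε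
  obtain ⟨δ, hδ, hstab⟩ := stab hcK hneK s c
    (fun p hp => edge_dotp_vvec hcK hneK hs hp) (half_pos hε)
  have hev : ∀ᶠ n in atTop, Metric.hausdorffDist (Kseq n) K < δ :=
    hconv (Iio_mem_nhds hδ)
  rw [Filter.eventually_atTop] at hev
  obtain ⟨N, hN⟩ := hev
  refine ⟨N, fun n hn => ?_⟩
  have hd := hN n hn
  have hedist : EMetric.hausdorffEdist (Kseq n) K ≠ ⊤ :=
    Metric.hausdorffEdist_ne_top_of_nonempty_of_bounded (hnen n) hneK
      (hcn n).isBounded hcK.isBounded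
  have hall : ∀ p ∈ edge (Kseq n) s, |dotp p (vvec s) - c| ≤ ε/2 := by
    intro p hp
    apply hstab
    · exact le_of_lt (lt_of_le_of_lt
        (Metric.infDist_le_hausdorffDist_of_mem (edge_subset s hp) hedist) hd)
    · have h1 : dotp p (uvec s) = suppFn (Kseq n) s := hp.2
      have h2 := abs_suppFn_sub_le (hcn n) (hnen n) hcK hneK s
      have h3 := abs_le.1 h2
      linarith
  obtain ⟨p0, hp0⟩ := edge_nonempty (hcn n) (hnen n) s
  have hne' : ((fun p => dotp p (vvec s)) '' edge (Kseq n) s).Nonempty := ⟨_, p0, hp0, rfl⟩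
  have hub : Msup (Kseq n) s ≤ c + ε/2 :=
    csSup_le hne' (by rintro x ⟨p, hp, rfl⟩; linarith [(abs_le.1 (hall p hp)).2])
  have hlb : c - ε/2 ≤ Msup (Kseq n) s := by
    refine le_trans ?_ (le_csSup ⟨c + ε/2, ?_⟩ ⟨p0, hp0, rfl⟩)
    · linarith [(abs_le.1 (hall p0 hp0)).1]
    · rintro x ⟨p, hp, rfl⟩; linarith [(abs_le.1 (hall p hp)).2]
  rw [Real.dist_eq]
  have h9 : |Msup (Kseq n) s - c| ≤ ε/2 := abs_le.2 ⟨by linarith, by linarith⟩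
  linarith

lemma gplus_tendsto {Kseq : ℕ → Set Pt} (hcK : IsCompact K) (hneK : K.Nonempty)
    (hcn : ∀ n, IsCompact (Kseq n)) (hnen : ∀ n, (Kseq n).Nonempty)
    (hconv : Tendsto (fun n => Metric.hausdorffDist (Kseq n) K) atTop (𝓝 0))
    {t : ℝ} (hs : DifferentiableAt ℝ (suppFn K) (t + π/2)) :
    Tendsto (fun n => gplus (Kseq n) t) atTop (𝓝 (gplus K t)) := by
  have h1 : Tendsto (fun n => suppFn (Kseq n) t) atTop (𝓝 (suppFn K t)) := by
    rw [tendsto_iff_dist_tendsto_zero]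
    apply squeeze_zero (fun n => dist_nonneg) (fun n => ?_) hconv
    rw [Real.dist_eq]
    exact abs_suppFn_sub_le (hcn n) (hnen n) hcK hneK t
  have h2 := Msup_tendsto hcK hneK hcn hnen hconv hs
  have h3 : gplus K t = suppFn K t + deriv (suppFn K) (t + π/2) := by
    rw [gplus_eq, Msup_eq_deriv hcK hneK hs]
  simp only [gplus_eq]
  rw [Msup_eq_deriv hcK hneK hs]
  exact h1.add h2

lemma ae_shift {P : ℝ → Prop} (h : ∀ᵐ s, P s) (a : ℝ) : ∀ᵐ t, P (t + a) := by
  have hmp : MeasurePreserving (fun x : ℝ => x + a) volume volume :=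
    measurePreserving_add_right volume a
  rw [ae_iff] at h ⊢
  exact hmp.quasiMeasurePreserving.preimage_null h

lemma ae_diff_suppFn (hc : IsCompact K) (hne : K.Nonempty) :
    ∀ᵐ s, DifferentiableAt ℝ (suppFn K) s := by
  obtain ⟨R, hR⟩ := hc.isBounded.exists_norm_le
  have hR0 : 0 ≤ R := le_trans (norm_nonneg _) (hR hne.choose hne.choose_spec)
  exact (lipschitzWith_suppFn hc hne hR0 hR).ae_differentiableAt

lemma aesm_gplus (hc : IsCompact K) (hne : K.Nonempty) :
    AEStronglyMeasurable (gplus K) volume := by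
  have hG : Measurable (fun t => suppFn K t + deriv (suppFn K) (t + π/2)) :=
    ((continuous_suppFn hc hne).measurable).add
      ((measurable_deriv (suppFn K)).comp (measurable_id.add_const _))
  apply hG.aestronglyMeasurable.congr
  filter_upwards [ae_shift (ae_diff_suppFn hc hne) (π/2)] with t ht
  rw [gplus_eq, Msup_eq_deriv hc hne ht]

lemma abs_gplus_le (hc : IsCompact K) (hne : K.Nonempty) {R : ℝ} (hR : ∀ p ∈ K, ‖p‖ ≤ R)
    (t : ℝ) : |gplus K t| ≤ 2 * R := by
  rw [gplus_eq]
  have h1 := abs_suppFn_le hc hne hR t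
  have h2 := abs_Msup_le hc hne hR (t + π/2)
  calc |suppFn K t + Msup K (t + π/2)| ≤ |suppFn K t| + |Msup K (t + π/2)| := abs_add_le _ _
  _ ≤ 2 * R := by linarith

theorem main (Kseq : ℕ → Set Pt) (K : Set Pt)
    (hcn : ∀ n, IsCompact (Kseq n)) (hnen : ∀ n, (Kseq n).Nonempty)
    (hcK : IsCompact K) (hneK : K.Nonempty)
    (hconv : Tendsto (fun n => Metric.hausdorffDist (Kseq n) K) atTop (𝓝 0)) :
    Tendsto (fun n => ∫ t in Icc (0:ℝ) (π/2), |gplus (Kseq n) t - gplus K t|)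
      atTop (𝓝 0) := by
  obtain ⟨R, hR⟩ := hcK.isBounded.exists_norm_le
  have hR0 : 0 ≤ R := le_trans (norm_nonneg _) (hR hneK.choose hneK.choose_spec)
  set μ := volume.restrict (Icc (0:ℝ) (π/2)) with hμ
  have key := MeasureTheory.tendsto_integral_filter_of_dominated_convergence
    (μ := μ) (l := atTop) (F := fun n t => |gplus (Kseq n) t - gplus K t|)
    (f := fun _ => (0:ℝ)) (fun _ => 4*R + 2)
    (by
      apply Filter.Eventually.of_forall
      intro n
      exact ((((aesm_gplus (hcn n) (hnen n)).sub (aesm_gplus hcK hneK)).norm).restrict))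
    (by
      have hev : ∀ᶠ n in atTop, Metric.hausdorffDist (Kseq n) K < 1 :=
        hconv (Iio_mem_nhds one_pos)
      filter_upwards [hev] with n hd
      apply Filter.Eventually.of_forall
      intro t
      have hedist : EMetric.hausdorffEdist (Kseq n) K ≠ ⊤ :=
        Metric.hausdorffEdist_ne_top_of_nonempty_of_bounded (hnen n) hneK
          (hcn n).isBounded hcK.isBounded
      have hRn : ∀ p ∈ Kseq n, ‖p‖ ≤ R + 1 := by
        intro p hp
        obtain ⟨q, hq, hdq⟩ := hcK.exists_infDist_eq_dist hneK p
        have h1 : dist p q ≤ 1 := by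
          rw [← hdq]
          exact le_of_lt (lt_of_le_of_lt
            (Metric.infDist_le_hausdorffDist_of_mem hp hedist) hd)
        have h2 : ‖p‖ - ‖q‖ ≤ ‖p - q‖ := norm_sub_norm_le p q
        rw [← dist_eq_norm] at h2
        linarith [hR q hq]
      have h1 := abs_gplus_le (hcn n) (hnen n) hRn t
      have h2 := abs_gplus_le hcK hneK hR t
      have h3 : |gplus (Kseq n) t - gplus K t| ≤ |gplus (Kseq n) t| + |gplus K t| :=
        abs_sub _ _
      rw [Real.norm_eq_abs, abs_abs]
      linarith)
    (by
      rw [hμ, ← IntegrableOn]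
      exact integrableOn_const measure_Icc_lt_top.ne)
    (by
      apply ae_restrict_of_ae
      filter_upwards [ae_shift (ae_diff_suppFn hcK hneK) (π/2)] with t ht
      have h1 := gplus_tendsto hcK hneK hcn hnen hconv ht
      have h2 : Tendsto (fun n => gplus (Kseq n) t - gplus K t) atTop (𝓝 0) := by
        have := h1.sub (tendsto_const_nhds (x := gplus K t))
        simpa using this
      have h3 := h2.abs
      rwa [abs_zero] at h3)
  simpa using key

theorem stmt_15 (Kseq : ℕ → Set Pt) (K : Set Pt)
    (hKseq : ∀ n, ∃ Θ : Finset ℝ, Θ.Nonempty ∧ (∀ t ∈ Θ, t ∈ Ioo 0 (π/2)) ∧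
      IsPolyCap (π/2) Θ (Kseq n))
    (hK : IsCap (π/2) K)
    (hconv : Tendsto (fun n => Metric.hausdorffDist (Kseq n) K) atTop (𝓝 0)) :
    Tendsto (fun n => ∫ t in Icc (0:ℝ) (π/2), |gplus (Kseq n) t - gplus K t|)
      atTop (𝓝 0) := by
  have hcn : ∀ n, IsCompact (Kseq n) := fun n => (hKseq n).choose_spec.2.2.1.1.2.1
  have hnen : ∀ n, (Kseq n).Nonempty := fun n => (hKseq n).choose_spec.2.2.1.1.1
  exact main Kseq K hcn hnen hK.1.2.1 hK.1.1 hconv
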